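/- For nonzero complex numbers x_1,...,x_N, y_1,...,y_N with x_i ≠ y_j for all i,j, pairwise distinct within each family, and any complex u: det[ 1/(y_j − x_i) + u/x_i + u·y_j/x_i^2 ]_{i,j=1}^N = det[ 1/(y_j − x_i) ]_{i,j=1}^N · [ 1 − 2u(1 − ∏_i y_i/x_i) − (u − u^2)·(∏_i y_i/x_i)·(∑_i (1/x_i − 1/y_i))·(∑_i (x_i − y_i)) + u^2·(∏_i y_i/x_i − 1)^2 ]. -/

import Mathlib

/-!
Write `C = (1 / (y_j - x_i))`, `A = ∏ (X - x_i)`, `B = ∏ (X - y_j)` and `P = ∏ y_i / x_i`.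
The perturbation is `u • U V` with `U = [1/x, 1/x²]` and `V = [1; y]`, so once `C W = U` we get
`det (C + u • U V) = det C * det (1 + u • V W)`, a quadratic in `u`. At `u = 1` it equals
`det C * P²`, because `C + U V = diag (x⁻²) C diag (y²)`; so only the linear coefficient, the
trace `∑ w + ∑ y z` of `V W`, has to be computed.

The first column `w` of `W` comes from the partial fraction expansion
`P A(t) / (t B(t)) = 1/t + ∑ w_j / (t - y_j)`, whose left side vanishes at every `x_i`; these
`w_j` are the Lagrange coefficients of `(P A - B) / X` at the nodes `y`. The second column is
`z = w / y + (∑ w / y) w`, by `1 / (y (y - x)) = (1 / x) (1 / (y - x) - 1 / y)`. Finally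
`∑ w = P - 1` and `∑ y w = P (∑ y - ∑ x)` are top coefficients of interpolants, and
`∑ w / y = ∑ (1/x - 1/y)` is the expansion at `t = 0`, a logarithmic derivative of `A / B`.
-/

open Finset Polynomial Lagrange

section Nodal

variable {R ι : Type*} [CommRing R] {s : Finset ι} {v : ι → R}

theorem Lagrange.coeff_card_nodal [Nontrivial R] : (nodal s v).coeff #s = 1 := by
  simpa [natDegree_nodal] using (nodal_monic (s := s) (v := v)).coeff_natDegree

theorem Lagrange.coeff_card_sub_one_nodal [Nontrivial R] (hs : s.Nonempty) :
    (nodal s v).coeff (#s - 1) = -∑ i ∈ s, v i := by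
  have h := prod_X_sub_C_nextCoeff (s := s) v
  rwa [← nodal_eq, nextCoeff_of_natDegree_pos (by simpa [natDegree_nodal] using hs),
    natDegree_nodal] at h

theorem Lagrange.degree_nodal_sub_nodal_lt [Nontrivial R] (w : ι → R) :
    (nodal s v - nodal s w).degree < #s := by
  rw [← degree_nodal (v := v)]
  exact degree_sub_lt_left (by rw [degree_nodal, degree_nodal]) nodal_ne_zero
    (by rw [nodal_monic.leadingCoeff, nodal_monic.leadingCoeff])

theorem Lagrange.coeff_one_nodal {K : Type*} [Field K] [DecidableEq ι] {v : ι → K}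
    (hv : ∀ i ∈ s, v i ≠ 0) :
    (nodal s v).coeff 1 = -(nodal s v).eval 0 * ∑ i ∈ s, (v i)⁻¹ := by
  induction s using Finset.induction_on with
  | empty => simp [coeff_one]
  | insert a s ha ih =>
    have hs : ∀ i ∈ s, v i ≠ 0 := fun i hi => hv i (mem_insert_of_mem hi)
    rw [nodal_insert_eq_nodal ha, mul_comm, coeff_mul_X_sub_C, ih hs, sum_insert ha,
      coeff_zero_eq_eval_zero, eval_mul]
    field_simp [hv a (mem_insert_self a s)]
    simp

end Nodal

section PartialFractions

variable {K ι : Type*} [Field K] [Fintype ι] [DecidableEq ι] {y : ι → K}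

theorem Lagrange.eval_eq_eval_nodal_mul_sum (hy : Function.Injective y) {p : K[X]}
    (hp : p.degree < Fintype.card ι) {t : K} (ht : ∀ j, t ≠ y j) :
    p.eval t = (nodal univ y).eval t *
      ∑ j, p.eval (y j) / (∏ k ∈ univ.erase j, (y j - y k)) / (t - y j) := by
  conv_lhs => rw [eq_interpolate hy.injOn hp]
  rw [eval_interpolate_not_at_node _ fun j _ => ht j]
  congr 1
  refine sum_congr rfl fun j _ => ?_
  rw [nodalWeight, prod_inv_distrib]
  ring

end PartialFractions

section Cauchy

variable {K ι : Type*} [Field K] [Fintype ι] (x y : ι → K)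

noncomputable def cauchyPoly : K[X] :=
  divX (C (∏ i, y i / x i) * nodal univ x - nodal univ y)

theorem degree_cauchyPoly_lt : (cauchyPoly x y).degree < Fintype.card ι := by
  set p := C (∏ i, y i / x i) * nodal univ x - nodal univ y
  have hp : p.degree ≤ Fintype.card ι := by
    refine (degree_sub_le _ _).trans
      (max_le ((degree_mul_le_of_le degree_C_le le_rfl).trans ?_) ?_) <;> simp [degree_nodal]
  rcases eq_or_ne p 0 with h | h
  · show (divX p).degree < _
    simp [h]
  · exact (degree_divX_lt h).trans_le hp

variable {x y}

theorem prod_div_mul_eval_zero_nodal (hx : ∀ i, x i ≠ 0) :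
    (∏ i, y i / x i) * (nodal univ x).eval 0 = (nodal univ y).eval 0 := by
  simp only [eval_nodal, zero_sub, ← prod_mul_distrib]
  exact prod_congr rfl fun i _ => by field_simp [hx i]

theorem X_mul_cauchyPoly (hx : ∀ i, x i ≠ 0) :
    X * cauchyPoly x y = C (∏ i, y i / x i) * nodal univ x - nodal univ y := by
  have h0 : (C (∏ i, y i / x i) * nodal univ x - nodal univ y).coeff 0 = 0 := by
    rw [coeff_sub, coeff_C_mul, coeff_zero_eq_eval_zero, coeff_zero_eq_eval_zero,
      prod_div_mul_eval_zero_nodal hx, sub_self]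
  have h := X_mul_divX_add (C (∏ i, y i / x i) * nodal univ x - nodal univ y)
  rwa [h0, C_0, add_zero] at h

variable [DecidableEq ι]

theorem cauchyPoly_eval_zero (hx : ∀ i, x i ≠ 0) (hy : ∀ j, y j ≠ 0) :
    (cauchyPoly x y).eval 0 = (nodal univ y).eval 0 * ∑ i, (1 / y i - 1 / x i) := by
  rw [← coeff_zero_eq_eval_zero, cauchyPoly, coeff_divX, zero_add, coeff_sub, coeff_C_mul,
    coeff_one_nodal fun i _ => hx i, coeff_one_nodal fun i _ => hy i, sum_sub_distrib]
  simp only [one_div]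
  linear_combination -(∑ i, (x i)⁻¹) * prod_div_mul_eval_zero_nodal (y := y) hx

variable (x y) in
noncomputable def cauchySolution (j : ι) : K :=
  (cauchyPoly x y).eval (y j) / ∏ k ∈ univ.erase j, (y j - y k)

theorem eval_cauchyPoly_eq (hyinj : Function.Injective y) {t : K} (ht : ∀ j, t ≠ y j) :
    (cauchyPoly x y).eval t = -(nodal univ y).eval t * ∑ j, cauchySolution x y j / (y j - t) := by
  rw [eval_eq_eval_nodal_mul_sum hyinj (degree_cauchyPoly_lt x y) ht, neg_mul, ← mul_neg,
    ← sum_neg_distrib]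
  refine congrArg _ (sum_congr rfl fun j _ => ?_)
  rw [cauchySolution, ← neg_sub (y j), div_neg]

theorem sum_cauchySolution_div_sub (hx : ∀ i, x i ≠ 0) (hyinj : Function.Injective y)
    (hxy : ∀ i j, x i ≠ y j) (i : ι) :
    ∑ j, cauchySolution x y j / (y j - x i) = 1 / x i := by
  have hB : (nodal univ y).eval (x i) ≠ 0 := eval_nodal_not_at_node fun j _ => hxy i j
  have hX := congrArg (eval (x i)) (X_mul_cauchyPoly (y := y) hx)
  simp only [eval_mul, eval_X, eval_sub, eval_C, eval_nodal_at_node (mem_univ i), mul_zero,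
    zero_sub, eval_cauchyPoly_eq hyinj (hxy i)] at hX
  field_simp [hx i]
  apply mul_left_cancel₀ hB
  linear_combination -hX

theorem sum_cauchySolution_div (hx : ∀ i, x i ≠ 0) (hy : ∀ j, y j ≠ 0)
    (hyinj : Function.Injective y) :
    ∑ j, cauchySolution x y j / y j = ∑ i, (1 / x i - 1 / y i) := by
  have hB : (nodal univ y).eval 0 ≠ 0 := eval_nodal_not_at_node fun j _ => (hy j).symm
  have h := eval_cauchyPoly_eq (x := x) hyinj fun j => (hy j).symm
  simp only [cauchyPoly_eval_zero hx hy, sub_zero, sum_sub_distrib] at h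
  apply mul_left_cancel₀ hB
  simp only [sum_sub_distrib]
  linear_combination h

theorem sum_cauchySolution [Nonempty ι] (hyinj : Function.Injective y) :
    ∑ j, cauchySolution x y j = ∏ i, y i / x i - 1 := by
  have h := coeff_eq_sum hyinj.injOn (by rw [card_univ]; exact degree_cauchyPoly_lt x y)
  rw [card_univ, cauchyPoly, coeff_divX, Nat.sub_add_cancel Fintype.card_pos, coeff_sub,
    coeff_C_mul, ← card_univ, coeff_card_nodal, coeff_card_nodal, mul_one] at h
  exact h.symm

theorem sum_mul_cauchySolution [Nonempty ι] (hx : ∀ i, x i ≠ 0) (hyinj : Function.Injective y) :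
    ∑ j, y j * cauchySolution x y j = (∏ i, y i / x i) * (∑ j, y j - ∑ i, x i) := by
  have hnode (j : ι) : y j * (cauchyPoly x y).eval (y j)
      = (∏ i, y i / x i) * (nodal univ x - nodal univ y).eval (y j) := by
    have h := congrArg (eval (y j)) (X_mul_cauchyPoly (y := y) hx)
    simp only [eval_mul, eval_X, eval_sub, eval_C, eval_nodal_at_node (mem_univ j)] at h ⊢
    rw [h, sub_zero, sub_zero]
  have h := coeff_eq_sum hyinj.injOn (degree_nodal_sub_nodal_lt (s := univ) (v := x) y)
  rw [coeff_sub, coeff_card_sub_one_nodal univ_nonempty,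
    coeff_card_sub_one_nodal univ_nonempty] at h
  calc ∑ j, y j * cauchySolution x y j
      = (∏ i, y i / x i) * ∑ j, (nodal univ x - nodal univ y).eval (y j) /
          ∏ k ∈ univ.erase j, (y j - y k) := by
        rw [mul_sum]
        exact sum_congr rfl fun j _ => by rw [cauchySolution, mul_div_assoc', hnode, mul_div_assoc]
    _ = (∏ i, y i / x i) * (∑ j, y j - ∑ i, x i) := by rw [← h]; ring

end Cauchy

theorem Matrix.det_add_smul_mul_of_mul_eq {m n R : Type*} [Fintype m] [DecidableEq m]
    [Fintype n] [DecidableEq n] [CommRing R] {C : Matrix n n R} {U W : Matrix n m R}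
    (V : Matrix m n R) (hCW : C * W = U) (u : R) :
    (C + u • (U * V)).det = C.det * (1 + u • (V * W)).det := by
  have h : C + u • (U * V) = C * (1 + (u • W) * V) := by
    rw [← hCW, Matrix.mul_add, Matrix.mul_one, Matrix.smul_mul, Matrix.mul_smul,
      Matrix.mul_assoc]
  rw [h, Matrix.det_mul, Matrix.det_one_add_mul_comm, Matrix.mul_smul]

section CauchyMatrix

variable {K ι : Type*} [Field K] [Fintype ι] {x y : ι → K}

theorem sum_div_sub_eq_one_div_sq {w : ι → K} (hx : ∀ i, x i ≠ 0) (hy : ∀ j, y j ≠ 0)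
    (hxy : ∀ i j, x i ≠ y j) (hw : ∀ i, ∑ j, w j / (y j - x i) = 1 / x i) (i : ι) :
    ∑ j, (w j / y j + (∑ k, w k / y k) * w j) / (y j - x i) = 1 / x i ^ 2 := by
  have hsplit (j : ι) : (w j / y j + (∑ k, w k / y k) * w j) / (y j - x i)
      = 1 / x i * (w j / (y j - x i) - w j / y j) + (∑ k, w k / y k) * (w j / (y j - x i)) := by
    have : y j - x i ≠ 0 := sub_ne_zero.mpr (hxy i j).symm
    field_simp [hx i, hy j]
    ring
  rw [sum_congr rfl fun j _ => hsplit j, sum_add_distrib, ← mul_sum, ← mul_sum, sum_sub_distrib,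
    hw i]
  field_simp [hx i]
  ring

theorem det_cauchy_add_smul [DecidableEq ι] {w z : ι → K}
    (hw : ∀ i, ∑ j, w j / (y j - x i) = 1 / x i)
    (hz : ∀ i, ∑ j, z j / (y j - x i) = 1 / x i ^ 2) (u : K) :
    (Matrix.of fun i j => 1 / (y j - x i) + u / x i + u * y j / x i ^ 2).det
      = (Matrix.of fun i j => 1 / (y j - x i)).det *
        (1 + u * (∑ j, w j + ∑ j, y j * z j)
          + u ^ 2 * ((∑ j, w j) * (∑ j, y j * z j) - (∑ j, z j) * (∑ j, y j * w j))) := by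
  set C : Matrix ι ι K := Matrix.of fun i j => 1 / (y j - x i)
  let U : Matrix ι (Fin 2) K := Matrix.of fun i => ![1 / x i, 1 / x i ^ 2]
  let V : Matrix (Fin 2) ι K := Matrix.of ![fun _ => 1, y]
  let W : Matrix ι (Fin 2) K := Matrix.of fun j => ![w j, z j]
  have hCW : C * W = U := by
    ext i k
    fin_cases k
    · simpa [C, U, W, Matrix.mul_apply, div_eq_mul_inv, mul_comm] using hw i
    · simpa [C, U, W, Matrix.mul_apply, div_eq_mul_inv, mul_comm] using hz i
  have hM : (Matrix.of fun i j => 1 / (y j - x i) + u / x i + u * y j / x i ^ 2)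
      = C + u • (U * V) := by
    ext i j
    simp only [C, U, V, Matrix.of_apply, Matrix.add_apply, Matrix.smul_apply, Matrix.mul_apply,
      Fin.sum_univ_two, Matrix.cons_val_zero, Matrix.cons_val_one, smul_eq_mul]
    ring
  have hVW : V * W = !![∑ j, w j, ∑ j, z j; ∑ j, y j * w j, ∑ j, y j * z j] := by
    ext a b
    fin_cases a <;> fin_cases b <;> simp [V, W, Matrix.mul_apply]
  rw [hM, Matrix.det_add_smul_mul_of_mul_eq V hCW, hVW, Matrix.det_fin_two]
  congr 1
  simp only [Matrix.add_apply, Matrix.smul_apply, Matrix.of_apply, Matrix.cons_val',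
    Matrix.cons_val_zero, Matrix.cons_val_one, Matrix.cons_val_fin_one, Matrix.one_apply_eq,
    Matrix.one_apply_ne zero_ne_one, Matrix.one_apply_ne one_ne_zero, smul_eq_mul]
  ring

theorem det_cauchy_add_one [DecidableEq ι] (hx : ∀ i, x i ≠ 0) (hxy : ∀ i j, x i ≠ y j) :
    (Matrix.of fun i j => 1 / (y j - x i) + 1 / x i + y j / x i ^ 2).det
      = (Matrix.of fun i j => 1 / (y j - x i)).det * (∏ i, y i / x i) ^ 2 := by
  have h : (Matrix.of fun i j => 1 / (y j - x i) + 1 / x i + y j / x i ^ 2)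
      = Matrix.of fun i j => (1 / x i ^ 2) * (y j ^ 2 * (1 / (y j - x i))) := by
    ext i j
    have : y j - x i ≠ 0 := sub_ne_zero.mpr (hxy i j).symm
    simp only [Matrix.of_apply]
    field_simp [hx i]
    ring
  calc _ = (∏ i, 1 / x i ^ 2) * (Matrix.of fun i j => y j ^ 2 * (1 / (y j - x i))).det := by
        rw [h]; exact Matrix.det_mul_column _ _
    _ = (∏ i, 1 / x i ^ 2) * ((∏ j, y j ^ 2) * (Matrix.of fun i j => 1 / (y j - x i)).det) := by
        rw [← Matrix.det_mul_row (fun j => y j ^ 2)]; rfl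
    _ = _ := by
        simp only [← prod_pow, div_pow, prod_div_distrib, one_div, prod_inv_distrib]
        ring

end CauchyMatrix

theorem stmt8_general (N : ℕ) (x y : Fin N → ℂ)
    (hyinj : Function.Injective y)
    (hx : ∀ i, x i ≠ 0) (hy : ∀ j, y j ≠ 0)
    (hxy : ∀ i j, x i ≠ y j) (u : ℂ) :
    Matrix.det (Matrix.of fun i j : Fin N =>
        1 / (y j - x i) + u / x i + u * y j / (x i) ^ 2)
    = Matrix.det (Matrix.of fun i j : Fin N => 1 / (y j - x i)) *
      (1 - 2 * u * (1 - ∏ i, y i / x i)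
        - (u - u ^ 2) * (∏ i, y i / x i) *
            (∑ i, (1 / x i - 1 / y i)) * (∑ i, (x i - y i))
        + u ^ 2 * ((∏ i, y i / x i) - 1) ^ 2) := by
  rcases isEmpty_or_nonempty (Fin N) with hN | hN
  · simp [Matrix.det_isEmpty]
  have hw := sum_cauchySolution_div_sub hx hyinj hxy
  have hz := sum_div_sub_eq_one_div_sq hx hy hxy hw
  have hyz (w : Fin N → ℂ) : ∑ j, y j * (w j / y j + (∑ k, w k / y k) * w j)
      = ∑ j, w j + (∑ k, w k / y k) * ∑ j, y j * w j := by
    rw [mul_sum, ← sum_add_distrib]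
    exact sum_congr rfl fun j _ => by field_simp [hy j]
  have hone := det_cauchy_add_smul hw hz 1
  simp only [one_mul, one_pow, det_cauchy_add_one hx hxy] at hone
  rw [det_cauchy_add_smul hw hz u]
  rw [hyz, sum_cauchySolution_div hx hy hyinj, sum_cauchySolution hyinj,
    sum_mul_cauchySolution hx hyinj] at hone ⊢
  simp only [sum_sub_distrib] at hone ⊢
  linear_combination (-u ^ 2) * hone

theorem stmt8 (N : ℕ) (x y : Fin N → ℂ)
    (hxinj : Function.Injective x) (hyinj : Function.Injective y)
    (hx : ∀ i, x i ≠ 0) (hy : ∀ j, y j ≠ 0)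
    (hxy : ∀ i j, x i ≠ y j) (u : ℂ) :
    Matrix.det (Matrix.of fun i j : Fin N =>
        1 / (y j - x i) + u / x i + u * y j / (x i) ^ 2)
    = Matrix.det (Matrix.of fun i j : Fin N => 1 / (y j - x i)) *
      (1 - 2 * u * (1 - ∏ i, y i / x i)
        - (u - u ^ 2) * (∏ i, y i / x i) *
            (∑ i, (1 / x i - 1 / y i)) * (∑ i, (x i - y i))
        + u ^ 2 * ((∏ i, y i / x i) - 1) ^ 2) :=
  stmt8_general N x y hyinj hx hy hxy u
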